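/- (a) If a nonsingular finite poset P elementarily zips onto a poset P′, then P′ is nonsingular (hence zipping preserves nonsingularity). (b) If a nonsingular finite poset P admits a sequence of elementary zippings P = P_0 → P_1 → ⋯ → P_n with composite quotient map f : P → P_n, then the dual map f^op : P^op → (P_n)^op is a constructible map. -/

import Mathlib

universe u

/-- `a` is a maximal element of the subposet `A`. -/
def IsMaxIn {P : Type*} [PartialOrder P] (A : Set P) (a : P) : Prop :=
  a ∈ A ∧ ∀ x ∈ A, a ≤ x → x = a

/-- `b` covers `a` within the subposet `A`: `a < b` and no element of `A` lies
strictly between them. -/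
def CoversIn {P : Type*} [PartialOrder P] (A : Set P) (a b : P) : Prop :=
  a ∈ A ∧ b ∈ A ∧ a < b ∧ ∀ x ∈ A, a < x → ¬x < b

/-- The subposet `A` is of codimension one in the subposet `B`: every maximal element
of `A` is covered (within `B`) by a maximal element of `B`. -/
def CodimOneIn {P : Type*} [PartialOrder P] (A B : Set P) : Prop :=
  ∀ a : P, IsMaxIn A a → ∃ b : P, IsMaxIn B b ∧ CoversIn B a b

/-- The subposet `A` is of pure codimension one in the subposet `B`: it is of
codimension one, and no maximal element of `A` is covered by a non-maximal element
of `B`. -/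
def PureCodimOneIn {P : Type*} [PartialOrder P] (A B : Set P) : Prop :=
  CodimOneIn A B ∧ ∀ a : P, IsMaxIn A a → ∀ b : P, CoversIn B a b → IsMaxIn B b

/-- `A` is a closed subposet of the subposet `B`. -/
def IsClosedSubposet {P : Type*} [PartialOrder P] (B A : Set P) : Prop :=
  A ⊆ B ∧ ∀ a ∈ A, ∀ x ∈ B, x ≤ a → x ∈ A

/-- A (sub)poset is constructible if either it has a greatest element, or it is a union
`Q ∪ R` of closed subposets such that `Q ∩ R` is of codimension one both in `Q` and in
`R`, and each of `Q`, `R` and `Q ∩ R` is constructible. -/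
inductive PosetConstructible {P : Type*} [PartialOrder P] : Set P → Prop where
  | cone {A : Set P} {g : P} (hg : g ∈ A) (hgreatest : ∀ x ∈ A, x ≤ g) :
      PosetConstructible A
  | step {Q R : Set P} (hQ : IsClosedSubposet (Q ∪ R) Q) (hR : IsClosedSubposet (Q ∪ R) R)
      (hcQ : CodimOneIn (Q ∩ R) Q) (hcR : CodimOneIn (Q ∩ R) R)
      (cQ : PosetConstructible Q) (cR : PosetConstructible R)
      (cQR : PosetConstructible (Q ∩ R)) : PosetConstructible (Q ∪ R)

/-- A monotone map `f : P → Q` is a filtration map if `f⁻¹(⌊q⌋ \ {q})` is of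
codimension one in `f⁻¹(⌊q⌋)` for every `q`. -/
def IsFiltrationMap {P Q : Type*} [PartialOrder P] [PartialOrder Q] (f : P → Q) : Prop :=
  ∀ q : Q, CodimOneIn (f ⁻¹' {y | y < q}) (f ⁻¹' {y | y ≤ q})

/-- A monotone map `f : P → Q` is a pure filtration map if `f⁻¹(⌊q⌋ \ {q})` is of
pure codimension one in `f⁻¹(⌊q⌋)` for every `q`. -/
def IsPureFiltrationMap {P Q : Type*} [PartialOrder P] [PartialOrder Q] (f : P → Q) :
    Prop :=
  ∀ q : Q, PureCodimOneIn (f ⁻¹' {y | y < q}) (f ⁻¹' {y | y ≤ q})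

/-- A monotone map is constructible if it is a filtration map and every `f⁻¹(⌊q⌋)` is
constructible. -/
def IsConstructibleMap {P Q : Type*} [PartialOrder P] [PartialOrder Q] (f : P → Q) :
    Prop :=
  IsFiltrationMap f ∧ ∀ q : Q, PosetConstructible (f ⁻¹' {y | y ≤ q})

/-- A poset is nonsingular if it contains no interval of cardinality exactly three. -/
def NonsingularPoset (P : Type*) [PartialOrder P] : Prop :=
  ∀ a b : P, (Set.Icc a b).ncard ≠ 3

/-- `f : α → β` is the elementary zipping of `α` along `p`, where `p` covers the two
incomparable elements `q` and `r`: `f` is the surjective monotone quotient map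
identifying `p`, `q` and `r`, with the order on the quotient as described by
Reading's zipping. -/
def IsElementaryZipping {α β : Type u} [PartialOrder α] [PartialOrder β]
    (f : α → β) (p q r : α) : Prop :=
  ¬q ≤ r ∧ ¬r ≤ q ∧ q ⋖ p ∧ r ⋖ p ∧
  (∀ s : α, s < p → s ≠ q → s ≠ r → s < q ∧ s < r) ∧
  (∀ s : α, q < s → r < s → p ≤ s) ∧
  Monotone f ∧ Function.Surjective f ∧
  (∀ x y : α, f x = f y ↔ x = y ∨ (x ∈ ({p, q, r} : Set α) ∧ y ∈ ({p, q, r} : Set α))) ∧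
  (∀ x y : α, x ∉ ({p, q, r} : Set α) → y ∉ ({p, q, r} : Set α) → (f x ≤ f y ↔ x ≤ y)) ∧
  (∀ x : α, x ∉ ({p, q, r} : Set α) → (f x ≤ f p ↔ x ≤ p ∨ x ≤ q ∨ x ≤ r)) ∧
  (∀ y : α, y ∉ ({p, q, r} : Set α) → (f p ≤ f y ↔ p ≤ y ∨ q ≤ y ∨ r ≤ y))

/-- `ZipSeq α β f` holds when `f` is the composite of a finite sequence of elementary
zippings `α = P₀ → P₁ → ⋯ → Pₙ = β`. -/
inductive ZipSeq : ∀ (α : Type u) [PartialOrder α] (β : Type u) [PartialOrder β],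
    (α → β) → Prop where
  | refl (α : Type u) [PartialOrder α] : ZipSeq α α id
  | step {α β γ : Type u} [PartialOrder α] [PartialOrder β] [PartialOrder γ]
      {g : α → β} {h : β → γ} (p q r : β)
      (hg : ZipSeq α β g) (hh : IsElementaryZipping h p q r) : ZipSeq α γ (h ∘ g)

/-- The dual of a monotone map: the same function between the order duals. -/
def dualMap {α β : Type u} [PartialOrder α] [PartialOrder β] (f : α → β) :
    αᵒᵈ → βᵒᵈ :=
  fun x => OrderDual.toDual (f (OrderDual.ofDual x))

/-!
Dually, an elementary zipping `u` collapses an element `p` together with the two elements `q`, `r`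
covering it, and is an order embedding away from this fibre. Nonsingularity of the target is then
a local case check around `u p`, using nonsingularity of the intervals `[c, q]` and `[c, r]`.

For constructibility, the preimage of the cone below `u p` is the union of the cones below `q` and
`r`, which meet in the cone below `p`; so by induction along the zipping sequence every preimage of
a cone is constructible, provided the composite map pulls back pairs `A ⊆ B` (with `B` a lower set)
of pure codimension one. Over a finite poset purity means that every element of `B` above a
maximal element of `A` is maximal in `B`; in this form it pulls back along a single zipping of a
nonsingular poset, the one obstruction (a maximal element `a` of the preimage of `A` just below
`p`) being ruled out by nonsingularity of `[a, q]`. Pulling back `Iio c ⊆ Iic c` gives the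
filtration property.
-/

open OrderDual Set

section Nonsingular

variable {P : Type*} [PartialOrder P]

theorem nonsingularPoset_iff :
    NonsingularPoset P ↔ ∀ a m b : P, a < m → m < b → ∃ x, a < x ∧ x < b ∧ x ≠ m := by
  constructor
  · intro h a m b ham hmb
    by_contra! hthin
    refine h a b (ncard_eq_three.mpr ⟨a, m, b, ham.ne, (ham.trans hmb).ne, hmb.ne, ?_⟩)
    ext x
    simp only [mem_Icc, mem_insert_iff, mem_singleton_iff]
    refine ⟨fun ⟨hax, hxb⟩ => ?_, ?_⟩
    · rcases hax.eq_or_lt with rfl | hax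
      · exact .inl rfl
      rcases hxb.eq_or_lt with rfl | hxb
      · exact .inr (.inr rfl)
      · exact .inr (.inl (hthin x hax hxb))
    · rintro (rfl | rfl | rfl)
      exacts [⟨le_rfl, (ham.trans hmb).le⟩, ⟨ham.le, hmb.le⟩, ⟨(ham.trans hmb).le, le_rfl⟩]
  · intro h a b hcard
    have hfin : (Icc a b).Finite := finite_of_ncard_ne_zero (by omega)
    have hab : a ≤ b := by
      by_contra hab
      rw [Icc_eq_empty hab, ncard_empty] at hcard
      omega
    obtain ⟨m, ⟨ham, hmb⟩, hm⟩ := exists_mem_notMem_of_ncard_lt_ncard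
      (s := {a, b}) (t := Icc a b) (by rw [hcard]; exact (ncard_insert_le a {b}).trans_lt (by simp))
    simp only [mem_insert_iff, mem_singleton_iff, not_or] at hm
    have ham := lt_of_le_of_ne ham (Ne.symm hm.1)
    have hmb := lt_of_le_of_ne hmb hm.2
    obtain ⟨x, hax, hxb, hxm⟩ := h a m b ham hmb
    have hsub : ({a, m, b} : Set P) ⊆ Icc a b := by
      rintro y (rfl | rfl | rfl)
      exacts [⟨le_rfl, hab⟩, ⟨ham.le, hmb.le⟩, ⟨hab, le_rfl⟩]
    have htriple := eq_of_subset_of_ncard_le hsub (by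
      rw [hcard, ncard_eq_three.mpr ⟨a, m, b, ham.ne, (ham.trans hmb).ne, hmb.ne, rfl⟩]) hfin
    have hx : x ∈ ({a, m, b} : Set P) := htriple ▸ ⟨hax.le, hxb.le⟩
    rcases hx with rfl | rfl | rfl
    exacts [hax.false, hxm rfl, hxb.false]

theorem NonsingularPoset.exists_ne_of_lt_of_lt (h : NonsingularPoset P) {a m b : P}
    (ham : a < m) (hmb : m < b) : ∃ x, a < x ∧ x < b ∧ x ≠ m :=
  nonsingularPoset_iff.mp h a m b ham hmb

theorem NonsingularPoset.dual (h : NonsingularPoset P) : NonsingularPoset Pᵒᵈ :=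
  nonsingularPoset_iff.mpr fun _ _ _ ham hmb =>
    let ⟨x, hbx, hxa, hxm⟩ := h.exists_ne_of_lt_of_lt hmb ham
    ⟨toDual x, hxa, hbx, hxm⟩

theorem NonsingularPoset.of_dual (h : NonsingularPoset Pᵒᵈ) : NonsingularPoset P :=
  h.dual

end Nonsingular

section CodimOne

variable {P : Type*} [PartialOrder P]

theorem exists_coversIn_le [WellFoundedLT P] {B : Set P} {a x : P} (ha : a ∈ B) (hx : x ∈ B)
    (hax : a < x) : ∃ c, CoversIn B a c ∧ c ≤ x := by
  obtain ⟨c, ⟨hcB, hac, hcx⟩, hmin⟩ :=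
    wellFounded_lt.has_min {c | c ∈ B ∧ a < c ∧ c ≤ x} ⟨x, hx, hax, le_rfl⟩
  exact ⟨c, ⟨ha, hcB, hac, fun y hyB hay hyc => hmin y ⟨hyB, hay, hyc.le.trans hcx⟩ hyc⟩, hcx⟩

theorem pureCodimOneIn_iff [WellFoundedLT P] {A B : Set P} (hAB : A ⊆ B) :
    PureCodimOneIn A B ↔
      ∀ a, IsMaxIn A a → (∃ x ∈ B, a < x) ∧ ∀ x ∈ B, a < x → IsMaxIn B x := by
  constructor
  · intro ⟨hcodim, hpure⟩ a ha
    obtain ⟨b, -, hbB⟩ := hcodim a ha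
    refine ⟨⟨b, hbB.2.1, hbB.2.2.1⟩, fun x hx hax => ?_⟩
    obtain ⟨c, hc, hcx⟩ := exists_coversIn_le (hAB ha.1) hx hax
    have hcmax := hpure a ha c hc
    rwa [hcmax.2 x hx hcx]
  · intro h
    refine ⟨fun a ha => ?_, fun a ha b hb => (h a ha).2 b hb.2.1 hb.2.2.1⟩
    obtain ⟨x, hx, hax⟩ := (h a ha).1
    obtain ⟨c, hc, -⟩ := exists_coversIn_le (hAB ha.1) hx hax
    exact ⟨c, (h a ha).2 c hc.2.1 hc.2.2.1, hc⟩

theorem pureCodimOneIn_Iic {A : Set P} {g : P} (h : ∀ a, IsMaxIn A a → a ⋖ g) :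
    PureCodimOneIn A (Iic g) := by
  have hg : IsMaxIn (Iic g) g := ⟨le_rfl, fun x hx hgx => le_antisymm hx hgx⟩
  refine ⟨fun a ha => ⟨g, hg, (h a ha).le, le_rfl, (h a ha).lt,
    fun _ _ hax hxg => (h a ha).2 hax hxg⟩, fun a ha b hb => ?_⟩
  obtain rfl : b = g := hb.2.1.eq_or_lt.resolve_right ((h a ha).2 hb.2.2.1)
  exact hg

theorem pureCodimOneIn_Iio_Iic (c : P) : PureCodimOneIn (Iio c) (Iic c) :=
  pureCodimOneIn_Iic fun _ ha =>
    ⟨ha.1, fun x hax hxc => hax.ne' (ha.2 x hxc hax.le)⟩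

theorem CovBy.pureCodimOneIn_Iic_Iic {p q : P} (h : p ⋖ q) :
    PureCodimOneIn (Iic p) (Iic q) :=
  pureCodimOneIn_Iic fun _ ha => (ha.2 p le_rfl ha.1).symm ▸ h

theorem IsLowerSet.isClosedSubposet {A B : Set P} (hA : IsLowerSet A) (hAB : A ⊆ B) :
    IsClosedSubposet B A :=
  ⟨hAB, fun _ ha _ _ hxa => hA hxa ha⟩

end CodimOne

section PullBack

variable {P Q R : Type*} [PartialOrder P] [PartialOrder Q] [PartialOrder R]

def PullsBackPureCodimOne (u : P → Q) : Prop :=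
  ∀ A B : Set Q, IsLowerSet B → A ⊆ B → PureCodimOneIn A B →
    PureCodimOneIn (u ⁻¹' A) (u ⁻¹' B)

theorem PullsBackPureCodimOne.comp {g : P → Q} {u : Q → R} (hg : PullsBackPureCodimOne g)
    (hu : PullsBackPureCodimOne u) (hu_mono : Monotone u) : PullsBackPureCodimOne (u ∘ g) :=
  fun A B hB hAB h =>
    hg _ _ (hB.preimage hu_mono) (preimage_mono hAB) (hu A B hB hAB h)

theorem PullsBackPureCodimOne.isFiltrationMap {u : P → Q} (hu : PullsBackPureCodimOne u) :
    IsFiltrationMap u :=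
  fun c => (hu _ _ (isLowerSet_Iic c) Iio_subset_Iic_self (pureCodimOneIn_Iio_Iic c)).1

theorem PullsBackPureCodimOne.posetConstructible_preimage_union {u : P → Q}
    (hu : PullsBackPureCodimOne u) (hu_mono : Monotone u) {p q r : Q} (hq : p ⋖ q)
    (hr : p ⋖ r) (hqr : Iic q ∩ Iic r = Iic p)
    (hcone : ∀ c, PosetConstructible (u ⁻¹' Iic c)) :
    PosetConstructible (u ⁻¹' (Iic q ∪ Iic r)) := by
  have hinter : u ⁻¹' Iic q ∩ u ⁻¹' Iic r = u ⁻¹' Iic p := by rw [← preimage_inter, hqr]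
  have hcodim {s : Q} (hs : p ⋖ s) : CodimOneIn (u ⁻¹' Iic q ∩ u ⁻¹' Iic r) (u ⁻¹' Iic s) :=
    hinter ▸ (hu _ _ (isLowerSet_Iic s) (Iic_subset_Iic.2 hs.le) hs.pureCodimOneIn_Iic_Iic).1
  rw [preimage_union]
  exact .step ((isLowerSet_Iic q).preimage hu_mono |>.isClosedSubposet subset_union_left)
    ((isLowerSet_Iic r).preimage hu_mono |>.isClosedSubposet subset_union_right)
    (hcodim hq) (hcodim hr) (hcone q) (hcone r) (hinter ▸ hcone p)

end PullBack

/-- The order dual of an elementary zipping: `p` is covered by `q` and `r`. -/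
structure IsDualZipping {P Q : Type*} [PartialOrder P] [PartialOrder Q] (u : P → Q)
    (p q r : P) : Prop where
  not_le_q_r : ¬q ≤ r
  not_le_r_q : ¬r ≤ q
  covBy_q : p ⋖ q
  covBy_r : p ⋖ r
  lt_of_p_lt : ∀ s, p < s → s ≠ q → s ≠ r → q < s ∧ r < s
  le_p_of_lt_of_lt : ∀ s, s < q → s < r → s ≤ p
  monotone : Monotone u
  surjective : Function.Surjective u
  map_eq_map_iff : ∀ x y, u x = u y ↔ x = y ∨ (x ∈ ({p, q, r} : Set P) ∧ y ∈ ({p, q, r} : Set P))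
  map_le_map_iff_of_notMem : ∀ x y, x ∉ ({p, q, r} : Set P) → y ∉ ({p, q, r} : Set P) →
    (u x ≤ u y ↔ x ≤ y)
  map_p_le_map_iff : ∀ y, y ∉ ({p, q, r} : Set P) → (u p ≤ u y ↔ p ≤ y ∨ q ≤ y ∨ r ≤ y)
  map_le_map_p_iff : ∀ x, x ∉ ({p, q, r} : Set P) → (u x ≤ u p ↔ x ≤ p ∨ x ≤ q ∨ x ≤ r)

theorem IsElementaryZipping.dual {α β : Type u} [PartialOrder α] [PartialOrder β] {f : α → β}
    {p q r : α} (h : IsElementaryZipping f p q r) :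
    IsDualZipping (dualMap f) (toDual p) (toDual q) (toDual r) := by
  obtain ⟨hqr, hrq, hqp, hrp, hbelow, habove, hmono, hsurj, hfib, hord, hle_p, hp_le⟩ := h
  exact
    { not_le_q_r := hrq
      not_le_r_q := hqr
      covBy_q := hqp.toDual
      covBy_r := hrp.toDual
      lt_of_p_lt := fun s hs hsq hsr => hbelow (ofDual s) hs hsq hsr
      le_p_of_lt_of_lt := fun s hsq hsr => habove (ofDual s) hsq hsr
      monotone := hmono.dual
      surjective := hsurj
      map_eq_map_iff := fun x y => hfib (ofDual x) (ofDual y)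
      map_le_map_iff_of_notMem := fun x y hx hy => hord (ofDual y) (ofDual x) hy hx
      map_p_le_map_iff := fun y hy => hle_p (ofDual y) hy
      map_le_map_p_iff := fun x hx => hp_le (ofDual x) hx }

namespace IsDualZipping

variable {P Q : Type*} [PartialOrder P] [PartialOrder Q] {u : P → Q} {p q r : P}
  (hz : IsDualZipping u p q r)
include hz

theorem swap : IsDualZipping u p r q := by
  have hF : ({p, r, q} : Set P) = {p, q, r} := by rw [pair_comm]
  obtain ⟨hqr, hrq, hq, hr, hup, hdown, hmono, hsurj, hfib, hord, hp_le, hle_p⟩ := hz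
  refine ⟨hrq, hqr, hr, hq, fun s hs hsr hsq => (hup s hs hsq hsr).symm,
    fun s hsr hsq => hdown s hsq hsr, hmono, hsurj, ?_, ?_, ?_, ?_⟩ <;> simp only [hF]
  · exact hfib
  · exact hord
  · exact fun y hy => (hp_le y hy).trans (by rw [or_comm (a := q ≤ y)])
  · exact fun x hx => (hle_p x hx).trans (by rw [or_comm (a := x ≤ q)])

theorem map_eq_map_p_iff {x : P} : u x = u p ↔ x = p ∨ x = q ∨ x = r := by
  rw [hz.map_eq_map_iff]
  exact ⟨fun h => h.elim .inl And.left, fun h => .inr ⟨h, .inl rfl⟩⟩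

theorem map_q : u q = u p := hz.map_eq_map_p_iff.2 (.inr (.inl rfl))

theorem map_r : u r = u p := hz.map_eq_map_p_iff.2 (.inr (.inr rfl))

theorem map_eq_map_iff_of_ne {x y : P} (hy : u y ≠ u p) : u x = u y ↔ x = y := by
  rw [hz.map_eq_map_iff]
  exact or_iff_left fun h => hy (hz.map_eq_map_p_iff.2 h.2)

theorem eq_p_of_lt_of_map_eq {x y : P} (hxy : x < y) (h : u x = u y) : x = p := by
  have hpq := hz.covBy_q.lt
  have hpr := hz.covBy_r.lt
  have hqr := hz.not_le_q_r
  have hrq := hz.not_le_r_q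
  obtain rfl | ⟨hx, hy⟩ := (hz.map_eq_map_iff x y).1 h
  · exact absurd hxy (lt_irrefl x)
  rcases hx with rfl | rfl | rfl <;> rcases hy with rfl | rfl | rfl <;> first | rfl | order

theorem map_lt_map_of_lt {x y : P} (hxy : x < y) (hx : x ≠ p) : u x < u y :=
  (hz.monotone hxy.le).lt_of_ne fun h => hx (hz.eq_p_of_lt_of_map_eq hxy h)

theorem map_lt_map_of_lt_of_ne {x y : P} (hxy : x < y) (hy : u y ≠ u p) : u x < u y :=
  (hz.monotone hxy.le).lt_of_ne fun h => hxy.ne ((hz.map_eq_map_iff_of_ne hy).1 h)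

theorem lt_of_p_le {y : P} (hy : u y ≠ u p) (hpy : p ≤ y) : q < y ∧ r < y :=
  hz.lt_of_p_lt y (hpy.lt_of_ne fun h => hy (h ▸ rfl)) (fun h => hy (h ▸ hz.map_q))
    (fun h => hy (h ▸ hz.map_r))

theorem le_iff_p_le {x y : P} (hx : u x = u p) (hy : u y ≠ u p) : x ≤ y ↔ p ≤ y := by
  rcases hz.map_eq_map_p_iff.1 hx with rfl | rfl | rfl
  · rfl
  · exact ⟨hz.covBy_q.le.trans, fun h => (hz.lt_of_p_le hy h).1.le⟩
  · exact ⟨hz.covBy_r.le.trans, fun h => (hz.lt_of_p_le hy h).2.le⟩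

theorem map_le_map_iff {x y : P} (hy : u y ≠ u p) : u x ≤ u y ↔ x ≤ y := by
  have hyF : y ∉ ({p, q, r} : Set P) := fun h => hy (hz.map_eq_map_p_iff.2 h)
  by_cases hx : u x = u p
  · rw [hx, hz.map_p_le_map_iff y hyF, hz.le_iff_p_le hx hy, hz.le_iff_p_le hz.map_q hy,
      hz.le_iff_p_le hz.map_r hy, or_self, or_self]
  · exact hz.map_le_map_iff_of_notMem x y (fun h => hx (hz.map_eq_map_p_iff.2 h)) hyF

theorem lt_of_map_lt {x y : P} (hy : u y ≠ u p) (h : u x < u y) : x < y :=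
  ((hz.map_le_map_iff hy).1 h.le).lt_of_ne fun hxy => h.ne (congrArg u hxy)

theorem map_le_map_p_iff_of_ne {x : P} (hx : u x ≠ u p) : u x ≤ u p ↔ x ≤ q ∨ x ≤ r := by
  rw [hz.map_le_map_p_iff x fun h => hx (hz.map_eq_map_p_iff.2 h)]
  exact ⟨fun h => h.elim (fun h => .inl (h.trans hz.covBy_q.le)) id, .inr⟩

theorem lt_q_of_le {x : P} (hx : u x ≠ u p) (hxq : x ≤ q) : x < q :=
  hxq.lt_of_ne fun h => hx (h ▸ hz.map_q)

theorem exists_lt_of_map_lt {x y : P} (h : u x < u y) : ∃ y', u y' = u y ∧ x < y' := by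
  by_cases hy : u y = u p
  · rw [hy] at h ⊢
    rcases (hz.map_le_map_p_iff_of_ne h.ne).1 h.le with hxq | hxr
    · exact ⟨q, hz.map_q, hz.lt_q_of_le h.ne hxq⟩
    · exact ⟨r, hz.map_r, hz.swap.lt_q_of_le h.ne hxr⟩
  · exact ⟨y, rfl, hz.lt_of_map_lt hy h⟩

theorem exists_ne_p_map_eq (c : Q) : ∃ x, x ≠ p ∧ u x = c := by
  by_cases hc : c = u p
  · exact ⟨q, hz.covBy_q.lt.ne', hc ▸ hz.map_q⟩
  · obtain ⟨x, rfl⟩ := hz.surjective c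
    exact ⟨x, fun h => hc (h ▸ rfl), rfl⟩

theorem preimage_Iic_map {y : P} (hy : u y ≠ u p) : u ⁻¹' Iic (u y) = Iic y :=
  ext fun _ => hz.map_le_map_iff hy

theorem preimage_Iic_map_p : u ⁻¹' Iic (u p) = Iic q ∪ Iic r := by
  ext x
  by_cases hx : u x = u p
  · simp only [mem_preimage, mem_Iic, mem_union, hx, le_rfl, true_iff]
    rcases hz.map_eq_map_p_iff.1 hx with rfl | rfl | rfl
    exacts [.inl hz.covBy_q.le, .inl le_rfl, .inr le_rfl]
  · exact hz.map_le_map_p_iff_of_ne hx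

theorem Iic_inter_Iic : Iic q ∩ Iic r = Iic p := by
  ext x
  refine ⟨fun ⟨hxq, hxr⟩ => hz.le_p_of_lt_of_lt x ?_ ?_,
    fun hxp => ⟨hxp.trans hz.covBy_q.le, hxp.trans hz.covBy_r.le⟩⟩
  · exact hxq.lt_of_ne fun h => hz.not_le_q_r (h ▸ hxr)
  · exact hxr.lt_of_ne fun h => hz.not_le_r_q (h ▸ hxq)

theorem map_ne_of_lt_q {x : P} (hxq : x < q) (hxp : x ≠ p) : u x ≠ u p := by
  intro h
  rcases hz.map_eq_map_p_iff.1 h with rfl | rfl | rfl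
  exacts [hxp rfl, lt_irrefl _ hxq, hz.not_le_r_q hxq.le]

theorem lt_p_of_lt_of_lt {x : P} (hx : u x ≠ u p) (hxq : x < q) (hxr : x < r) : x < p :=
  (hz.le_p_of_lt_of_lt x hxq hxr).lt_of_ne fun h => hx (h ▸ rfl)

theorem exists_between_of_lt_q_of_map_p_lt (hP : NonsingularPoset P) {c d : P}
    (hc : u c ≠ u p) (hcq : c < q) (hd : u p < u d) : ∃ x, c < x ∧ x < d ∧ u x ≠ u p := by
  have hqd : q < d := hz.lt_of_map_lt hd.ne' (hz.map_q ▸ hd)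
  obtain ⟨x, hcx, hxd, hxq⟩ := hP.exists_ne_of_lt_of_lt hcq hqd
  by_cases hx : u x = u p
  · -- `x` is `p` or `r`; either way `c < p`, and nonsingularity of `[c, q]` moves off the fibre
    have hcp : c < p := by
      rcases hz.map_eq_map_p_iff.1 hx with rfl | rfl | rfl
      exacts [hcx, absurd rfl hxq, hz.lt_p_of_lt_of_lt hc hcq hcx]
    obtain ⟨y, hcy, hyq, hyp⟩ := hP.exists_ne_of_lt_of_lt hcp hz.covBy_q.lt
    exact ⟨y, hcy, hyq.trans hqd, hz.map_ne_of_lt_q hyq hyp⟩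
  · exact ⟨x, hcx, hxd, hx⟩

theorem exists_between_of_map_lt_map_p_of_lt_q (hP : NonsingularPoset P) {c m : P}
    (hm : u m ≠ u p) (hcm : c < m) (hmq : m < q) (hmp : ¬m < p) :
    ∃ x, c < x ∧ u x < u p ∧ x ≠ m := by
  obtain ⟨x, hcx, hxq, hxm⟩ := hP.exists_ne_of_lt_of_lt hcm hmq
  by_cases hxp : x = p
  · subst hxp
    obtain ⟨y, hcy, hyr, hyp⟩ := hP.exists_ne_of_lt_of_lt hcx hz.covBy_r.lt
    refine ⟨y, hcy, hz.map_r ▸ hz.map_lt_map_of_lt hyr hyp, ?_⟩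
    rintro rfl
    exact hmp (hz.lt_p_of_lt_of_lt hm hmq hyr)
  · exact ⟨x, hcx, hz.map_q ▸ hz.map_lt_map_of_lt hxq hxp, hxm⟩

theorem exists_between_of_map_lt_map_p (hP : NonsingularPoset P) {c m : P}
    (hm : u m ≠ u p) (hcm : c < m) (hmp : u m < u p) : ∃ x, c < x ∧ u x < u p ∧ x ≠ m := by
  by_cases hmp' : m < p
  · obtain ⟨x, hcx, hxp, hxm⟩ := hP.exists_ne_of_lt_of_lt hcm hmp'
    exact ⟨x, hcx, hz.map_lt_map_of_lt hxp hxp.ne, hxm⟩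
  rcases (hz.map_le_map_p_iff_of_ne hm).1 hmp.le with hmq | hmr
  · exact hz.exists_between_of_map_lt_map_p_of_lt_q hP hm hcm (hz.lt_q_of_le hm hmq) hmp'
  · exact hz.swap.exists_between_of_map_lt_map_p_of_lt_q hP hm hcm
      (hz.swap.lt_q_of_le hm hmr) hmp'

theorem nonsingularPoset (hP : NonsingularPoset P) : NonsingularPoset Q := by
  refine nonsingularPoset_iff.2 fun C M D hCM hMD => ?_
  obtain ⟨c, hcp, rfl⟩ := hz.exists_ne_p_map_eq C
  obtain ⟨m, rfl⟩ := hz.surjective M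
  obtain ⟨d, rfl⟩ := hz.surjective D
  by_cases hm : u m = u p
  · rw [hm] at hCM hMD ⊢
    obtain ⟨x, hcx, hxd, hx⟩ : ∃ x, c < x ∧ x < d ∧ u x ≠ u p := by
      rcases (hz.map_le_map_p_iff_of_ne hCM.ne).1 hCM.le with hcq | hcr
      · exact hz.exists_between_of_lt_q_of_map_p_lt hP hCM.ne (hz.lt_q_of_le hCM.ne hcq) hMD
      · exact hz.swap.exists_between_of_lt_q_of_map_p_lt hP hCM.ne
          (hz.swap.lt_q_of_le hCM.ne hcr) hMD
    exact ⟨u x, hz.map_lt_map_of_lt hcx hcp, hz.map_lt_map_of_lt_of_ne hxd hMD.ne', hx⟩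
  have hcm := hz.lt_of_map_lt hm hCM
  have hne {x : P} (hxm : x ≠ m) : u x ≠ u m := (hz.map_eq_map_iff_of_ne hm).not.2 hxm
  by_cases hd : u d = u p
  · rw [hd] at hMD ⊢
    obtain ⟨x, hcx, hxp, hxm⟩ := hz.exists_between_of_map_lt_map_p hP hm hcm hMD
    exact ⟨u x, hz.map_lt_map_of_lt hcx hcp, hxp, hne hxm⟩
  · obtain ⟨x, hcx, hxd, hxm⟩ := hP.exists_ne_of_lt_of_lt hcm (hz.lt_of_map_lt hd hMD)
    exact ⟨u x, hz.map_lt_map_of_lt hcx hcp, hz.map_lt_map_of_lt_of_ne hxd hd, hne hxm⟩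

theorem isMaxIn_map {A : Set Q} {a : P} (ha : IsMaxIn (u ⁻¹' A) a) : IsMaxIn A (u a) := by
  refine ⟨ha.1, fun c hc hac => ?_⟩
  by_contra hne
  obtain ⟨y, rfl⟩ := hz.surjective c
  obtain ⟨y', hy', hay'⟩ := hz.exists_lt_of_map_lt (hac.lt_of_ne (Ne.symm hne))
  exact hay'.ne' (ha.2 y' (by rwa [mem_preimage, hy']) hay'.le)

theorem ne_p_of_isMaxIn_preimage {A : Set Q} {a : P} (ha : IsMaxIn (u ⁻¹' A) a) : a ≠ p := by
  rintro rfl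
  exact hz.covBy_q.lt.ne' (ha.2 q (by rw [mem_preimage, hz.map_q]; exact ha.1) hz.covBy_q.le)

theorem isMaxIn_preimage {B : Set Q} {b : P} (hb : IsMaxIn B (u b)) (hbp : b ≠ p) :
    IsMaxIn (u ⁻¹' B) b := by
  refine ⟨hb.1, fun y hy hby => ?_⟩
  by_contra hne
  have hlt := hz.map_lt_map_of_lt (hby.lt_of_ne (Ne.symm hne)) hbp
  exact hlt.ne' (hb.2 (u y) hy hlt.le)

theorem pullsBackPureCodimOne [WellFoundedLT P] [WellFoundedLT Q] (hP : NonsingularPoset P) :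
    PullsBackPureCodimOne u := by
  intro A B hB hAB h
  rw [pureCodimOneIn_iff hAB] at h
  rw [pureCodimOneIn_iff (preimage_mono hAB)]
  intro a ha
  have hap := hz.ne_p_of_isMaxIn_preimage ha
  obtain ⟨⟨c, hcB, hac⟩, hmax⟩ := h (u a) (hz.isMaxIn_map ha)
  refine ⟨?_, fun x hx hax => hz.isMaxIn_preimage (hmax _ hx (hz.map_lt_map_of_lt hax hap)) ?_⟩
  · obtain ⟨y, rfl⟩ := hz.surjective c
    obtain ⟨y', hy', hay'⟩ := hz.exists_lt_of_map_lt hac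
    exact ⟨y', by rwa [mem_preimage, hy'], hay'⟩
  · -- if `a < p`, nonsingularity of `[a, q]` gives `v` with `u a < u v < u p` inside `B`
    intro hxp
    rw [hxp] at hx hax
    obtain ⟨v, hav, hvq, hvp⟩ := hP.exists_ne_of_lt_of_lt hax hz.covBy_q.lt
    have hvB : u v ∈ B := hB (hz.monotone hvq.le) (by rwa [hz.map_q])
    have hv := hz.map_q ▸ hz.map_lt_map_of_lt hvq hvp
    exact hv.ne (hmax _ hvB (hz.map_lt_map_of_lt hav hap) |>.2 (u p) hx hv.le).symm

end IsDualZipping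

namespace ZipSeq

variable {α β : Type u} [PartialOrder α] [PartialOrder β] {f : α → β}

theorem surjective (hf : ZipSeq α β f) : Function.Surjective f := by
  induction hf with
  | refl => exact Function.surjective_id
  | step _ _ _ _ hh ih => exact hh.dual.surjective.comp ih

theorem monotone (hf : ZipSeq α β f) : Monotone f := by
  induction hf with
  | refl => exact monotone_id
  | step _ _ _ _ hh ih => exact hh.dual.monotone.dual.comp ih

theorem nonsingularPoset (hf : ZipSeq α β f) (hα : NonsingularPoset α) :
    NonsingularPoset β := by
  induction hf with
  | refl => exact hα
  | step _ _ _ _ hh ih => exact (hh.dual.nonsingularPoset (ih hα).dual).of_dual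

theorem pullsBackPureCodimOne_dualMap [Finite α] (hf : ZipSeq α β f)
    (hα : NonsingularPoset α) : PullsBackPureCodimOne (dualMap f) := by
  induction hf with
  | refl => exact fun _ _ _ _ h => h
  | step _ _ _ hg hh ih =>
    have := Finite.of_surjective _ hg.surjective
    have := Finite.of_surjective _ hh.dual.surjective
    exact (ih hα).comp (hh.dual.pullsBackPureCodimOne (hg.nonsingularPoset hα).dual)
      hh.dual.monotone

theorem posetConstructible_preimage_Iic [Finite α] (hf : ZipSeq α β f)
    (hα : NonsingularPoset α) (c : βᵒᵈ) : PosetConstructible (dualMap f ⁻¹' Iic c) := by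
  induction hf with
  | refl => exact .cone (le_refl c) fun _ hx => hx
  | @step _ _ _ _ _ g h p _ _ hg hh ih =>
    have hz := hh.dual
    obtain ⟨y, rfl⟩ := hz.surjective c
    rw [show dualMap (h ∘ g) = dualMap h ∘ dualMap g from rfl, preimage_comp]
    by_cases hy : dualMap h y = dualMap h (toDual p)
    · rw [hy, hz.preimage_Iic_map_p]
      exact (hg.pullsBackPureCodimOne_dualMap hα).posetConstructible_preimage_union
        hg.monotone.dual hz.covBy_q hz.covBy_r hz.Iic_inter_Iic (ih hα)
    · rw [hz.preimage_Iic_map hy]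
      exact ih hα y

end ZipSeq

/-- (a) An elementary zipping of a nonsingular finite poset has nonsingular target.
(b) If a nonsingular finite poset `α` zips onto `β` with composite quotient map `f`,
then the dual map `f^op : αᵒᵈ → βᵒᵈ` is a constructible map. -/
theorem zipping_nonsingular_and_dual_constructible :
    (∀ (α β : Type u) [PartialOrder α] [PartialOrder β] [Finite α] [Finite β]
        (f : α → β) (p q r : α),
        NonsingularPoset α → IsElementaryZipping f p q r → NonsingularPoset β) ∧
    (∀ (α β : Type u) [PartialOrder α] [PartialOrder β] [Finite α] [Finite β]
        (f : α → β),
        NonsingularPoset α → ZipSeq α β f → IsConstructibleMap (dualMap f)) :=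
  ⟨fun _ _ _ _ _ _ _ _ _ _ hα hf => (hf.dual.nonsingularPoset hα.dual).of_dual,
    fun _ _ _ _ _ _ _ hα hf =>
      ⟨(hf.pullsBackPureCodimOne_dualMap hα).isFiltrationMap,
        hf.posetConstructible_preimage_Iic hα⟩⟩
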